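/- Let $N$ be a positive integer and let $x_0, x_1, x_2, x_3$ be positive integers summing to $N$, with $X_k = x_k/N$, $MI$ the mutual information of the table, and $P_H$ the hypergeometric probability of the table. Then $-\log P_H - N\cdot MI > -\frac{3}{2}\log(N+1) + \frac{1}{12(N+1)} - \frac{1}{2N} - 0.735$. -/

import Mathlib

/-- Mutual information of a 2×2 contingency table with cell probabilities
`X0 X1 X2 X3`, with the convention `0 * log 0 = 0`. -/
noncomputable def mi2x2 (X0 X1 X2 X3 : ℝ) : ℝ :=
  (X0 * Real.log X0 + X1 * Real.log X1 + X2 * Real.log X2 + X3 * Real.log X3)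
    - (X0 + X1) * Real.log (X0 + X1) - (X2 + X3) * Real.log (X2 + X3)
    - (X0 + X2) * Real.log (X0 + X2) - (X1 + X3) * Real.log (X1 + X3)

/-- Hypergeometric probability of the observed 2×2 table with cell counts
`x0 x1 x2 x3` and total `N = x0 + x1 + x2 + x3`. -/
noncomputable def hypProb (x0 x1 x2 x3 : ℕ) : ℝ :=
  ((x0 + x1).factorial * (x2 + x3).factorial * (x0 + x2).factorial *
      (x1 + x3).factorial : ℝ) /
    ((x0 + x1 + x2 + x3).factorial * x0.factorial * x1.factorial * x2.factorial *
      x3.factorial : ℝ)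

/-!
Writing `log n! = n log n - n + S n`, the leading terms of `-log P_H` cancel exactly against
`N · MI`, leaving `S N + ∑ S xᵢ - ∑ S mⱼ` over cells `xᵢ` and marginals `mⱼ`. Stirling's bounds
`log (2πn) / 2 ≤ S n ≤ log n / 2 + 1`, together with AM-GM for each pair of complementary
marginals (`log m + log m' ≤ 2 log (N / 2)`), bound this below by
`(5/2) log (2π) + 2 log 2 - 4 - (3/2) log N`, which exceeds the claimed bound.
-/

open Real
open scoped Nat

theorem log_factorial_le_stirling {n : ℕ} (hn : n ≠ 0) :
    log n ! ≤ n * log n - n + log n / 2 + 1 := by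
  obtain ⟨m, rfl⟩ := Nat.exists_eq_add_one_of_ne_zero hn
  have hseq : Stirling.stirlingSeq (m + 1) ≤ exp 1 / √2 :=
    Stirling.stirlingSeq_one ▸ Stirling.stirlingSeq'_antitone (Nat.zero_le m)
  have hlog := log_le_log (Stirling.stirlingSeq'_pos m) hseq
  rw [Stirling.log_stirlingSeq_formula, log_div (exp_ne_zero 1) (by positivity), log_exp,
    log_sqrt zero_le_two, log_mul two_ne_zero (by positivity), log_div (by positivity)
    (exp_ne_zero 1), log_exp] at hlog
  linarith

noncomputable def stirlingRemainder (n : ℕ) : ℝ := log n ! - (n * log n - n)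

theorem le_stirlingRemainder {n : ℕ} (hn : n ≠ 0) :
    log n / 2 + log (2 * π) / 2 ≤ stirlingRemainder n := by
  have := Stirling.le_log_factorial_stirling hn
  unfold stirlingRemainder
  linarith

theorem stirlingRemainder_le {n : ℕ} (hn : n ≠ 0) : stirlingRemainder n ≤ log n / 2 + 1 := by
  have := log_factorial_le_stirling hn
  unfold stirlingRemainder
  linarith

theorem half_log_two_pi_le_stirlingRemainder {n : ℕ} (hn : n ≠ 0) :
    log (2 * π) / 2 ≤ stirlingRemainder n := by
  have := log_natCast_nonneg n
  linarith [le_stirlingRemainder hn]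

theorem log_add_log_le_two_mul_log_add_div_two {a b : ℝ} (ha : 0 < a) (hb : 0 < b) :
    log a + log b ≤ 2 * log ((a + b) / 2) := by
  rw [← log_mul ha.ne' hb.ne', ← log_rpow (by positivity)]
  exact log_le_log (by positivity) (by norm_num; nlinarith [sq_nonneg (a - b)])

theorem mul_div_mul_log_div (x : ℝ) {y : ℝ} (hy : y ≠ 0) :
    y * (x / y * log (x / y)) = x * log x - x * log y := by
  rcases eq_or_ne x 0 with rfl | hx
  · simp
  rw [log_div hx hy]
  field_simp

theorem neg_log_hypProb_sub_mul_mi2x2 {N x0 x1 x2 x3 : ℕ} (hsum : x0 + x1 + x2 + x3 = N) :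
    -log (hypProb x0 x1 x2 x3) - N * mi2x2 (x0 / N) (x1 / N) (x2 / N) (x3 / N) =
      stirlingRemainder N + stirlingRemainder x0 + stirlingRemainder x1 +
        stirlingRemainder x2 + stirlingRemainder x3 - stirlingRemainder (x0 + x1) -
        stirlingRemainder (x2 + x3) - stirlingRemainder (x0 + x2) -
        stirlingRemainder (x1 + x3) := by
  rcases eq_or_ne N 0 with rfl | hN
  · obtain ⟨rfl, rfl, rfl, rfl⟩ : x0 = 0 ∧ x1 = 0 ∧ x2 = 0 ∧ x3 = 0 := by omega
    simp [hypProb, mi2x2, stirlingRemainder]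
  have hN' : (N : ℝ) ≠ 0 := by exact_mod_cast hN
  have hsum' : (x0 : ℝ) + x1 + x2 + x3 = N := by exact_mod_cast hsum
  have hfact (m : ℕ) : (m ! : ℝ) ≠ 0 := by exact_mod_cast m.factorial_ne_zero
  simp only [hypProb, mi2x2, ← add_div, mul_sub, mul_add, mul_div_mul_log_div _ hN',
    stirlingRemainder, hsum]
  rw [log_div (by simp [hfact]) (by simp [hfact])]
  simp only [log_mul, hfact, ne_eq, mul_eq_zero, or_self, not_false_eq_true]
  push_cast
  linear_combination (1 - log N) * hsum'

theorem stirlingRemainder_add_stirlingRemainder_le {m m' : ℕ} (hm : m ≠ 0) (hm' : m' ≠ 0) :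
    stirlingRemainder m + stirlingRemainder m' ≤ log (m + m' : ℕ) - log 2 + 2 := by
  have hlog := log_add_log_le_two_mul_log_add_div_two (a := m) (b := m') (by positivity)
    (by positivity)
  rw [log_div (by positivity) two_ne_zero] at hlog
  push_cast
  linarith [stirlingRemainder_le hm, stirlingRemainder_le hm']

theorem neg_log_hyp_sub_N_mi_lower (N : ℕ) (x0 x1 x2 x3 : ℕ)
    (h0 : 0 < x0) (h1 : 0 < x1) (h2 : 0 < x2) (h3 : 0 < x3)
    (hsum : x0 + x1 + x2 + x3 = N) :
    -Real.log (hypProb x0 x1 x2 x3) -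
        (N : ℝ) * mi2x2 ((x0 : ℝ) / N) ((x1 : ℝ) / N) ((x2 : ℝ) / N) ((x3 : ℝ) / N) >
      -(3 / 2) * Real.log (N + 1) + 1 / (12 * ((N : ℝ) + 1)) - 1 / (2 * N) - 0.735 := by
  rw [neg_log_hypProb_sub_mul_mi2x2 hsum]
  have hN : (0 : ℝ) < N := by exact_mod_cast (show 0 < N by omega)
  have hrows := stirlingRemainder_add_stirlingRemainder_le (m := x0 + x1) (m' := x2 + x3)
    (by omega) (by omega)
  have hcols := stirlingRemainder_add_stirlingRemainder_le (m := x0 + x2) (m' := x1 + x3)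
    (by omega) (by omega)
  rw [show x0 + x1 + (x2 + x3) = N by omega] at hrows
  rw [show x0 + x2 + (x1 + x3) = N by omega] at hcols
  have hpi : 2 * log 2 ≤ log (2 * π) := by
    rw [log_mul two_ne_zero pi_ne_zero]
    linarith [log_le_log two_pos two_le_pi]
  have hlogN : log N ≤ log (N + 1) := log_le_log hN (by linarith)
  have hinv : 1 / (12 * ((N : ℝ) + 1)) ≤ 1 / 12 := by
    gcongr
    linarith
  have hcells : ∀ x, 0 < x → log (2 * π) / 2 ≤ stirlingRemainder x := fun x hx =>
    half_log_two_pi_le_stirlingRemainder hx.ne'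
  linarith [le_stirlingRemainder (n := N) (by omega), hcells x0 h0, hcells x1 h1, hcells x2 h2,
    hcells x3 h3, log_two_gt_d9, one_div_pos.2 (mul_pos two_pos hN)]
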